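/- arXiv:math/0506193 — 4 statements merged into one kernel-verified Lean document; each statement's English description precedes it below -/
import Mathlib

section
/- In the Artin braid group B(A_n), with c_n := σ_n and c_k := σ_k^{-1} c_{k+1} σ_k for 1 ≤ k ≤ n−1, the relation σ_n c_k σ_n = c_k σ_n c_k holds for all 1 ≤ k ≤ n−1. -/
/-!
Downward induction on `k`. The base case `c_{n-1} = σ_{n-1}⁻¹ σ_n σ_{n-1}` braids with `σ_n`
because `σ_{n-1}` does. For `k < n-1`, `c_k` is the conjugate of `c_{k+1}` by `σ_k`, which
commutes with `σ_n`, and conjugating by an element that fixes `σ_n` preserves the braid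
relation with `σ_n`.
-/

/-- The braid relations of type `A_n` on generators `σ_1, …, σ_n`
(encoded with `0`-based indices `0, …, n-1`). -/
def braidRelsA (n : ℕ) : Set (FreeGroup (Fin n)) :=
  {r | (∃ i j : Fin n, (i : ℕ) + 1 = (j : ℕ) ∧
        r = .of i * .of j * .of i * (.of j * .of i * .of j)⁻¹) ∨
      (∃ i j : Fin n, (i : ℕ) + 1 < (j : ℕ) ∧
        r = .of i * .of j * (.of j * .of i)⁻¹)}

/-- The Artin braid group `B(A_n)` with generators `σ_1, …, σ_n`. -/
abbrev BraidA (n : ℕ) := PresentedGroup (braidRelsA n)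

/-- The generator `σ_{k+1}` of `B(A_n)` (`0`-based index `k`). -/
def σA {n : ℕ} (k : ℕ) : BraidA n :=
  if h : k < n then PresentedGroup.of ⟨k, h⟩ else 1

/-- The elements `c_k` (`0`-based: `cA n k` is `c_{k+1}` of the paper):
`c_n := σ_n` and `c_k := σ_k⁻¹ * c_{k+1} * σ_k`. -/
def cA (n : ℕ) (k : ℕ) : BraidA n :=
  if _h : k + 1 < n then (σA k)⁻¹ * cA n (k + 1) * σA k
  else if _h2 : k < n then σA k else 1
  termination_by n - k
  decreasing_by omega

section BraidRelation

variable {G : Type*} [Group G]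

theorem conj_braid_self_of_braid {s u : G} (h : s * u * s = u * s * u) :
    s * (u⁻¹ * s * u) * s = u⁻¹ * s * u * s * (u⁻¹ * s * u) := by
  have hconj : u⁻¹ * s * u = s * u * s⁻¹ := calc
    u⁻¹ * s * u = u⁻¹ * (s * u * s) * s⁻¹ := by group
    _ = u⁻¹ * (u * s * u) * s⁻¹ := by rw [h]
    _ = s * u * s⁻¹ := by group
  rw [hconj]
  calc s * (s * u * s⁻¹) * s = s * (s * u * s) * s⁻¹ := by group
    _ = s * (u * s * u) * s⁻¹ := by rw [h]
    _ = s * u * s⁻¹ * s * (s * u * s⁻¹) := by group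

theorem conj_braid_of_braid_of_commute {s d u : G} (hus : Commute u s)
    (h : s * d * s = d * s * d) :
    s * (u⁻¹ * d * u) * s = u⁻¹ * d * u * s * (u⁻¹ * d * u) := by
  have hs : u⁻¹ * s * u = s := by rw [mul_assoc, ← hus.eq, inv_mul_cancel_left]
  have h' := congrArg (MulAut.conj u⁻¹) h
  simp only [map_mul, MulAut.conj_apply, inv_inv, hs] at h'
  exact h'

end BraidRelation

theorem σA_mul_σA_mul_σA {n i : ℕ} (h : i + 1 < n) :
    σA (n := n) i * σA (i + 1) * σA i = σA (i + 1) * σA i * σA (i + 1) := by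
  simp only [σA, dif_pos h, dif_pos (Nat.lt_of_succ_lt h)]
  exact PresentedGroup.mk_eq_mk_of_mul_inv_mem (Or.inl ⟨⟨i, _⟩, ⟨i + 1, h⟩, rfl, rfl⟩)

theorem σA_commute {n i j : ℕ} (hij : i + 1 < j) (hj : j < n) :
    Commute (σA (n := n) i) (σA j) := by
  simp only [Commute, SemiconjBy, σA, dif_pos hj, dif_pos (show i < n by omega)]
  exact PresentedGroup.mk_eq_mk_of_mul_inv_mem (Or.inr ⟨⟨i, _⟩, ⟨j, hj⟩, hij, rfl⟩)

theorem cA_of_succ_lt {n k : ℕ} (h : k + 1 < n) :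
    cA n k = (σA k)⁻¹ * cA n (k + 1) * σA k := by
  rw [cA, dif_pos h]

theorem cA_of_succ_eq {n k : ℕ} (h : k + 1 = n) : cA n k = σA k := by
  rw [cA, dif_neg (by omega), dif_pos (by omega)]

/-- In `B(A_n)`, with `c_n := σ_n` and `c_k := σ_k⁻¹ c_{k+1} σ_k`, the relation
`σ_n c_k σ_n = c_k σ_n c_k` holds for all `1 ≤ k ≤ n-1` (`0`-based: `k + 1 < n`,
and `σ_n` is `σA (n-1)`). -/
theorem σA_cA_braid (n : ℕ) (k : ℕ) (hk : k + 1 < n) :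
    σA (n := n) (n - 1) * cA n k * σA (n := n) (n - 1)
      = cA n k * σA (n := n) (n - 1) * cA n k := by
  rw [cA_of_succ_lt hk]
  rcases (show k + 2 = n ∨ k + 2 < n by omega) with hlast | hlt
  · rw [show n - 1 = k + 1 by omega, cA_of_succ_eq hlast]
    exact conj_braid_self_of_braid (σA_mul_σA_mul_σA hk).symm
  · exact conj_braid_of_braid_of_commute (σA_commute (by omega) (by omega))
      (σA_cA_braid n (k + 1) hlt)
termination_by n - k
end

section
/- In the Artin braid group B(A_n), define c_n := σ_n and c_k := σ_k^{-1} c_{k+1} σ_k for 1 ≤ k ≤ n−1. Then c_i c_j c_i = c_j c_i c_j for all 1 ≤ i, j ≤ n−1 with i ≠ j. -/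
def Braided {G : Type*} [Mul G] (a b : G) : Prop :=
  a * b * a = b * a * b

namespace Braided

variable {G : Type*} [Group G] {a b c : G}

protected theorem eq (h : Braided a b) : a * b * a = b * a * b :=
  h

theorem symm (h : Braided a b) : Braided b a :=
  h.eq.symm

theorem conj (h : Braided a b) (g : G) : Braided (g⁻¹ * a * g) (g⁻¹ * b * g) :=
  calc g⁻¹ * a * g * (g⁻¹ * b * g) * (g⁻¹ * a * g) = g⁻¹ * (a * b * a) * g := by group
    _ = g⁻¹ * (b * a * b) * g := by rw [h.eq]
    _ = g⁻¹ * b * g * (g⁻¹ * a * g) * (g⁻¹ * b * g) := by group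

theorem conj_of_commute {g : G} (h : Braided a b) (hg : Commute g b) :
    Braided (g⁻¹ * a * g) b := by
  simpa only [hg.inv_mul_cancel] using h.conj g

theorem inv_mul_mul_eq (h : Braided a b) : a⁻¹ * b * a = b * a * b⁻¹ :=
  calc a⁻¹ * b * a = a⁻¹ * (b * a * b) * b⁻¹ := by group
    _ = a⁻¹ * (a * b * a) * b⁻¹ := by rw [h.eq]
    _ = b * a * b⁻¹ := by group

theorem inv_mul_mul_left (h : Braided a b) : Braided (a⁻¹ * b * a) b := by
  simpa only [h.inv_mul_mul_eq, inv_inv, mul_inv_cancel_right] using h.conj b⁻¹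

theorem inv_mul_mul_right (hab : Braided a b) (hbc : Braided b c) (hac : Commute a c) :
    Braided a (b⁻¹ * c * b) := by
  simpa only [hbc.inv_mul_mul_eq, inv_inv] using (hab.symm.conj_of_commute hac.symm.inv_left).symm

end Braided

section BraidA

variable {n : ℕ}

theorem σA_braided {k : ℕ} (h : k + 1 < n) : Braided (σA (n := n) k) (σA (k + 1)) := by
  rw [σA, σA, dif_pos h, dif_pos (by omega)]
  exact PresentedGroup.mk_eq_mk_of_mul_inv_mem (Or.inl ⟨⟨k, by omega⟩, ⟨k + 1, h⟩, rfl, rfl⟩)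

theorem σA_commute_s2 {k m : ℕ} (h : k + 1 < m) : Commute (σA (n := n) k) (σA m) := by
  by_cases hm : m < n
  · rw [σA, σA, dif_pos hm, dif_pos (by omega)]
    exact PresentedGroup.mk_eq_mk_of_mul_inv_mem (Or.inr ⟨⟨k, by omega⟩, ⟨m, hm⟩, h, rfl⟩)
  · rw [show σA (n := n) m = 1 from dif_neg hm]
    exact Commute.one_right _

theorem cA_of_add_one_lt {k : ℕ} (h : k + 1 < n) : cA n k = (σA k)⁻¹ * cA n (k + 1) * σA k := by
  rw [cA, dif_pos h]

theorem cA_of_add_one_eq {k : ℕ} (h : k + 1 = n) : cA n k = σA k := by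
  rw [cA, dif_neg (by omega), dif_pos (by omega)]

theorem cA_of_le {k : ℕ} (h : n ≤ k) : cA n k = 1 := by
  rw [cA, dif_neg (by omega), dif_neg (by omega)]

theorem σA_commute_cA {k m : ℕ} (h : k + 1 < m) : Commute (σA (n := n) k) (cA n m) := by
  rcases lt_trichotomy (m + 1) n with hm | hm | hm
  · rw [cA_of_add_one_lt hm]
    have hσ := σA_commute_s2 (n := n) h
    exact (hσ.inv_right.mul_right (σA_commute_cA (m := m + 1) (by omega))).mul_right hσ
  · rw [cA_of_add_one_eq hm]
    exact σA_commute_s2 h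
  · rw [cA_of_le (by omega)]
    exact Commute.one_right _
termination_by n - m

theorem σA_braided_cA {k : ℕ} (h : k + 1 < n) : Braided (σA k) (cA n (k + 1)) := by
  by_cases hk : k + 2 < n
  · rw [cA_of_add_one_lt hk]
    exact (σA_braided h).inv_mul_mul_right (σA_braided_cA hk) (σA_commute_cA (by omega))
  · rw [cA_of_add_one_eq (by omega)]
    exact σA_braided h
termination_by n - k

theorem cA_braided_of_lt {i j : ℕ} (hj : j + 1 < n) (hij : i < j) :
    Braided (cA n i) (cA n j) := by
  rw [cA_of_add_one_lt (by omega : i + 1 < n)]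
  rcases (Nat.succ_le_of_lt hij).eq_or_lt with rfl | hij'
  · exact (σA_braided_cA (k := i) (by omega)).inv_mul_mul_left
  · exact (cA_braided_of_lt hj hij').conj_of_commute (σA_commute_cA hij')
termination_by j - i

end BraidA

/-- In `B(A_n)`, `c_i c_j c_i = c_j c_i c_j` for all `1 ≤ i, j ≤ n-1` with
`i ≠ j` (`0`-based indices: `i + 1 < n`, `j + 1 < n`). -/
theorem cA_braid (n : ℕ) (i j : ℕ) (hi : i + 1 < n) (hj : j + 1 < n)
    (hij : i ≠ j) :
    cA n i * cA n j * cA n i = cA n j * cA n i * cA n j := by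
  rcases hij.lt_or_gt with h | h
  · exact cA_braided_of_lt hj h
  · exact (cA_braided_of_lt hi h).symm
end

section
/- For n ≥ 3, the group homomorphism η : B(K_n) → B(A_n), a_i ↦ c_i, is not injective. Specifically, the element a_1 a_2 a_1^{-1} a_n a_1 a_2^{-1} a_1^{-1} a_n^{-1} is nontrivial in B(K_n) but lies in the kernel of η. -/
/-- The relations of the braid group `B(K_n)` whose Coxeter graph is the
complete graph on `n` vertices: `a_i a_j a_i = a_j a_i a_j` for all `i ≠ j`. -/
def braidRelsK (n : ℕ) : Set (FreeGroup (Fin n)) :=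
  {r | ∃ i j : Fin n, i ≠ j ∧
        r = .of i * .of j * .of i * (.of j * .of i * .of j)⁻¹}

/-- The braid group `B(K_n)` of the complete graph on `n` vertices. -/
abbrev BraidK (n : ℕ) := PresentedGroup (braidRelsK n)

/-- The generator `a_{k+1}` of `B(K_n)` (`0`-based index `k`). -/
def aK {n : ℕ} (k : ℕ) : BraidK n :=
  if h : k < n then PresentedGroup.of ⟨k, h⟩ else 1

/-!
Send `a_2` to the transposition `(1 2)` and every other generator to `(0 1)`: any two
transpositions of `Fin 3` satisfy the braid relation, so this defines `B(K_n) → S_3`, and the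
element, which is the commutator `⁅a_1 a_2 a_1⁻¹, a_n⁆`, maps to `⁅(0 2), (0 1)⁆ ≠ 1`.

In `B(A_n)`, `σ_k` braids with `c_{k+1}` by downward induction on `k`: `c_{k+1}` is the conjugate
of `σ_{k+1}` by `c_{k+2}`, which commutes with `σ_k`. With `c_1 = σ_1⁻¹ c_2 σ_1` this gives
`c_1 c_2 c_1⁻¹ = σ_1`, which commutes with `c_n = σ_n` since `n ≥ 3`.
-/

open scoped commutatorElement

theorem braid_conj_of_commute {G : Type*} [Group G] {a b c : G}
    (hab : a * b * a = b * a * b) (hbc : b * c * b = c * b * c) (hac : Commute a c) :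
    a * (b⁻¹ * c * b) * a = (b⁻¹ * c * b) * a * (b⁻¹ * c * b) := by
  have hd : b⁻¹ * c * b = c * b * c⁻¹ :=
    calc b⁻¹ * c * b = b⁻¹ * (c * b * c) * c⁻¹ := by group
      _ = c * b * c⁻¹ := by rw [← hbc]; group
  have ha : c * a * c⁻¹ = a := by rw [← hac.eq]; group
  have := congrArg (MulAut.conj c) hab
  simpa only [map_mul, MulAut.conj_apply, ha, hd] using this

theorem conj_mul_conj_inv_of_braid {G : Type*} [Group G] {s c : G}
    (h : s * c * s = c * s * c) :
    (s⁻¹ * c * s) * c * (s⁻¹ * c * s)⁻¹ = s :=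
  calc (s⁻¹ * c * s) * c * (s⁻¹ * c * s)⁻¹
      = s⁻¹ * (c * s * c) * s⁻¹ * c⁻¹ * s := by group
    _ = s⁻¹ * (s * c * s) * s⁻¹ * c⁻¹ * s := by rw [h]
    _ = s := by group

namespace BraidA

variable {n : ℕ}

theorem σA_of {k : ℕ} (h : k < n) : σA (n := n) k = PresentedGroup.of ⟨k, h⟩ := dif_pos h

theorem σA_braid_succ {i : ℕ} (h : i + 1 < n) :
    σA (n := n) i * σA (i + 1) * σA i = σA (i + 1) * σA i * σA (i + 1) := by
  rw [σA_of h, σA_of (by omega : i < n)]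
  exact PresentedGroup.mk_eq_mk_of_mul_inv_mem (Or.inl ⟨⟨i, _⟩, ⟨i + 1, h⟩, rfl, rfl⟩)

theorem commute_σA {i j : ℕ} (hij : i + 1 < j) (hj : j < n) :
    Commute (σA (n := n) i) (σA j) := by
  rw [σA_of hj, σA_of (by omega : i < n)]
  exact PresentedGroup.mk_eq_mk_of_mul_inv_mem (Or.inr ⟨⟨i, _⟩, ⟨j, hj⟩, hij, rfl⟩)

theorem cA_of_succ_lt {k : ℕ} (h : k + 1 < n) : cA n k = (σA k)⁻¹ * cA n (k + 1) * σA k := by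
  rw [cA, dif_pos h]

theorem cA_of_succ_eq {k : ℕ} (h : k + 1 = n) : cA n k = σA k := by
  rw [cA, dif_neg (by omega), dif_pos (by omega)]

theorem commute_σA_cA {k j : ℕ} (hkj : k + 2 ≤ j) : Commute (σA (n := n) k) (cA n j) := by
  fun_induction cA n j with
  | case1 j hj ih =>
    have hσ := commute_σA (n := n) (i := k) (j := j) (by omega) (by omega)
    exact (hσ.inv_right.mul_right (ih (by omega))).mul_right hσ
  | case2 j _ hj => exact commute_σA (by omega) hj
  | case3 => exact Commute.one_right _

theorem σA_braid_cA {k : ℕ} (hk : k + 2 ≤ n) :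
    σA (n := n) k * cA n (k + 1) * σA k = cA n (k + 1) * σA k * cA n (k + 1) := by
  have hn : 2 ≤ n := by omega
  replace hk : k ≤ n - 2 := by omega
  induction hk using Nat.decreasingInduction with
  | self => rw [cA_of_succ_eq (by omega)]; exact σA_braid_succ (by omega)
  | of_succ k hk ih =>
    rw [cA_of_succ_lt (by omega)]
    exact braid_conj_of_commute (σA_braid_succ (by omega)) ih (commute_σA_cA le_rfl)

theorem cA_zero_mul_cA_one_mul_inv (hn : 2 ≤ n) : cA n 0 * cA n 1 * (cA n 0)⁻¹ = σA 0 := by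
  rw [cA_of_succ_lt (by omega)]
  exact conj_mul_conj_inv_of_braid (σA_braid_cA hn)

end BraidA

namespace BraidK

variable {n : ℕ}

def lift {G : Type*} [Group G] (f : Fin n → G)
    (hf : ∀ i j, i ≠ j → f i * f j * f i = f j * f i * f j) : BraidK n →* G :=
  PresentedGroup.toGroup (f := f) <| by
    rintro r ⟨i, j, hij, rfl⟩
    simp only [map_mul, map_inv, FreeGroup.lift_apply_of, mul_inv_eq_one, hf i j hij]

theorem lift_aK {G : Type*} [Group G] {f : Fin n → G}
    {hf : ∀ i j, i ≠ j → f i * f j * f i = f j * f i * f j} {k : ℕ} (hk : k < n) :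
    lift f hf (aK k) = f ⟨k, hk⟩ := by
  rw [aK, dif_pos hk, lift, PresentedGroup.toGroup.of]

def toPerm (n : ℕ) : BraidK n →* Equiv.Perm (Fin 3) :=
  lift (fun i => if (i : ℕ) = 1 then Equiv.swap 1 2 else Equiv.swap 0 1) fun i j _ => by
    split_ifs <;> decide

theorem commutator_aK_ne_one (hn : 3 ≤ n) :
    ⁅aK (n := n) 0 * aK 1 * (aK 0)⁻¹, aK (n := n) (n - 1)⁆ ≠ 1 := by
  intro h
  have hperm : ⁅(Equiv.swap 0 1 * Equiv.swap 1 2 * (Equiv.swap 0 1)⁻¹ : Equiv.Perm (Fin 3)),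
      (Equiv.swap 0 1 : Equiv.Perm (Fin 3))⁆ = 1 := by
    have := congrArg (toPerm n) h
    rwa [map_commutatorElement, map_mul, map_mul, map_inv, map_one, toPerm, lift_aK (by omega),
      lift_aK (by omega), lift_aK (by omega), if_neg zero_ne_one, if_pos rfl,
      if_neg (show n - 1 ≠ 1 by omega)] at this
  exact absurd hperm (by decide)

end BraidK

/-- For `n ≥ 3`, the homomorphism `η : B(K_n) → B(A_n)`, `a_i ↦ c_i`, is not
injective: the element `a_1 a_2 a_1⁻¹ a_n a_1 a_2⁻¹ a_1⁻¹ a_n⁻¹` is nontrivial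
in `B(K_n)` but lies in the kernel of `η` (`0`-based: `a_1 = aK 0`,
`a_2 = aK 1`, `a_n = aK (n-1)`). -/
theorem eta_not_injective (n : ℕ) (hn : 3 ≤ n) (η : BraidK n →* BraidA n)
    (hη : ∀ i : Fin n, η (aK (i : ℕ)) = cA n (i : ℕ)) :
    (aK (n := n) 0 * aK 1 * (aK 0)⁻¹ * aK (n - 1) * aK 0 * (aK 1)⁻¹ *
        (aK 0)⁻¹ * (aK (n - 1))⁻¹ ≠ 1) ∧
    η (aK (n := n) 0 * aK 1 * (aK 0)⁻¹ * aK (n - 1) * aK 0 * (aK 1)⁻¹ *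
        (aK 0)⁻¹ * (aK (n - 1))⁻¹) = 1 ∧
    ¬ Function.Injective η := by
  have hw : aK (n := n) 0 * aK 1 * (aK 0)⁻¹ * aK (n - 1) * aK 0 * (aK 1)⁻¹ *
      (aK 0)⁻¹ * (aK (n - 1))⁻¹ =
      ⁅aK (n := n) 0 * aK 1 * (aK 0)⁻¹, aK (n := n) (n - 1)⁆ := by
    rw [commutatorElement_def]; group
  have η_aK : ∀ k < n, η (aK k) = cA n k := fun k hk => hη ⟨k, hk⟩
  have hker : η ⁅aK (n := n) 0 * aK 1 * (aK 0)⁻¹, aK (n := n) (n - 1)⁆ = 1 := by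
    rw [map_commutatorElement, map_mul, map_mul, map_inv, η_aK 0 (by omega), η_aK 1 (by omega),
      η_aK (n - 1) (by omega), BraidA.cA_zero_mul_cA_one_mul_inv (by omega),
      BraidA.cA_of_succ_eq (by omega), commutatorElement_eq_one_iff_commute]
    exact BraidA.commute_σA (by omega) (by omega)
  rw [hw]
  have hne := BraidK.commutator_aK_ne_one hn
  exact ⟨hne, hker, fun hinj => hne (hinj (hker.trans η.map_one.symm))⟩
end

section
/- The map χ : B(B_n) → B(A_n) defined on generators by b_i ↦ σ_i for 1 ≤ i ≤ n−1 and b_n ↦ σ_n² extends to a group homomorphism; i.e., the elements σ_1,…,σ_{n-1}, σ_n² of the Artin braid group B(A_n) satisfy the Artin relations of type B_n. -/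
/-- The relations of the Artin group `B(B_n)` of type `B_n` on generators
`b_1, …, b_n` (`0`-based indices): the braid relation for consecutive
generators `b_i, b_{i+1}` with `i+1 ≤ n-2` (`0`-based), commutation for
distant generators, and the length-`4` relation
`b_{n-1} b_n b_{n-1} b_n = b_n b_{n-1} b_n b_{n-1}`. -/
def braidRelsB (n : ℕ) : Set (FreeGroup (Fin n)) :=
  {r | (∃ i j : Fin n, (i : ℕ) + 1 = (j : ℕ) ∧ (j : ℕ) + 1 < n ∧
        r = .of i * .of j * .of i * (.of j * .of i * .of j)⁻¹) ∨
      (∃ i j : Fin n, (i : ℕ) + 1 < (j : ℕ) ∧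
        r = .of i * .of j * (.of j * .of i)⁻¹) ∨
      (∃ i j : Fin n, (i : ℕ) + 2 = n ∧ (j : ℕ) + 1 = n ∧
        r = .of i * .of j * .of i * .of j *
          (.of j * .of i * .of j * .of i)⁻¹)}

/-- The Artin group `B(B_n)` of type `B_n`. -/
abbrev BraidB (n : ℕ) := PresentedGroup (braidRelsB n)

/-- The generator `b_{k+1}` of `B(B_n)` (`0`-based index `k`). -/
def bB {n : ℕ} (k : ℕ) : BraidB n :=
  if h : k < n then PresentedGroup.of ⟨k, h⟩ else 1

/-- The element `b_{n-1} b_{n-2} ⋯ b_2` of `B(B_n)` (`1`-based), i.e. the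
descending product `b_{n-2} ⋯ b_1` in `0`-based indices. -/
def descB (n : ℕ) : BraidB n :=
  (((List.range' 1 (n - 2)).map (fun k => bB (n := n) k)).reverse).prod

/-- The element `τ = b_n b_{n-1} ⋯ b_2` of `B(B_n)` (`1`-based indexing). -/
def tauB (n : ℕ) : BraidB n := bB (n - 1) * descB n

/-! Writing `Δ = a b a`, both sides of the type `B` relation between `a` and `b²` equal `Δ²`:
`a b² a b² = (a b)³` and `b² a b² a = (b a)³`, and `(a b)³ = Δ · b a b = b a b · Δ = (b a)³`. -/

theorem mul_sq_mul_mul_sq_comm_of_braid {M : Type*} [Monoid M] {a b : M}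
    (h : a * b * a = b * a * b) : a * b ^ 2 * a * b ^ 2 = b ^ 2 * a * b ^ 2 * a :=
  calc a * b ^ 2 * a * b ^ 2 = a * b * (b * a * b) * b := by simp only [sq, mul_assoc]
    _ = a * b * (a * b * a) * b := by rw [h]
    _ = (a * b * a) * (b * a * b) := by simp only [mul_assoc]
    _ = (b * a * b) * (a * b * a) := by rw [h]
    _ = b * (a * b * a) * (b * a) := by simp only [mul_assoc]
    _ = b ^ 2 * a * b ^ 2 * a := by rw [h]; simp only [sq, mul_assoc]

namespace BraidA

variable {n : ℕ}

theorem of_mul_of_mul_of {i j : Fin n} (hij : (i : ℕ) + 1 = j) :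
    (.of i * .of j * .of i : BraidA n) = .of j * .of i * .of j :=
  PresentedGroup.mk_eq_mk_of_mul_inv_mem (Or.inl ⟨i, j, hij, rfl⟩)

theorem commute_of {i j : Fin n} (hij : (i : ℕ) + 1 < j) :
    Commute (.of i : BraidA n) (.of j) :=
  PresentedGroup.mk_eq_mk_of_mul_inv_mem (Or.inr ⟨i, j, hij, rfl⟩)

end BraidA

def chiGen (n : ℕ) (i : Fin n) : BraidA n :=
  if (i : ℕ) + 1 < n then .of i else .of i ^ 2

theorem chiGen_of_lt {n : ℕ} {i : Fin n} (hi : (i : ℕ) + 1 < n) : chiGen n i = .of i :=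
  if_pos hi

theorem chiGen_of_not_lt {n : ℕ} {i : Fin n} (hi : ¬(i : ℕ) + 1 < n) : chiGen n i = .of i ^ 2 :=
  if_neg hi

theorem lift_chiGen_eq_one_of_mem_braidRelsB {n : ℕ} :
    ∀ r ∈ braidRelsB n, FreeGroup.lift (chiGen n) r = 1 := by
  rintro r (⟨i, j, hij, hj, rfl⟩ | ⟨i, j, hij, rfl⟩ | ⟨i, j, hi, hj, rfl⟩) <;>
    simp only [map_mul, map_inv, FreeGroup.lift_apply_of, mul_inv_eq_one]
  · rw [chiGen_of_lt hj, chiGen_of_lt (by omega)]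
    exact BraidA.of_mul_of_mul_of hij
  · rw [chiGen_of_lt (by omega)]
    by_cases hj : (j : ℕ) + 1 < n
    · rw [chiGen_of_lt hj]
      exact (BraidA.commute_of hij).eq
    · rw [chiGen_of_not_lt hj]
      exact ((BraidA.commute_of hij).pow_right 2).eq
  · rw [chiGen_of_lt (by omega), chiGen_of_not_lt (by omega)]
    exact mul_sq_mul_mul_sq_comm_of_braid (BraidA.of_mul_of_mul_of (by omega))

def chi (n : ℕ) : BraidB n →* BraidA n :=
  PresentedGroup.toGroup lift_chiGen_eq_one_of_mem_braidRelsB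

theorem chi_bB {n k : ℕ} (hk : k < n) : chi n (bB k) = chiGen n ⟨k, hk⟩ := by
  rw [bB, dif_pos hk, chi, PresentedGroup.toGroup.of]

/-- The map `b_i ↦ σ_i` for `1 ≤ i ≤ n-1` and `b_n ↦ σ_n²` extends to a group
homomorphism `χ : B(B_n) → B(A_n)`; i.e. the elements
`σ_1, …, σ_{n-1}, σ_n²` of the Artin braid group `B(A_n)` satisfy the Artin
relations of type `B_n` (`0`-based indices). -/
theorem exists_chi (n : ℕ) :
    ∃ χ : BraidB n →* BraidA n,
      (∀ i : Fin n, (i : ℕ) + 1 < n → χ (bB (i : ℕ)) = σA (i : ℕ)) ∧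
      χ (bB (n - 1)) = (σA (n := n) (n - 1)) ^ 2 := by
  refine ⟨chi n, fun i hi => ?_, ?_⟩
  · rw [chi_bB i.isLt, chiGen_of_lt hi, σA, dif_pos i.isLt]
  · rcases Nat.eq_zero_or_pos n with rfl | hn
    · simp only [bB, σA, Nat.lt_irrefl, dite_false, map_one, one_pow]
    · have hlast : n - 1 < n := by omega
      rw [chi_bB hlast, chiGen_of_not_lt (by simp only; omega), σA, dif_pos hlast]
end
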